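/- arXiv:1408.6048 — 4 statements merged into one kernel-verified Lean document; each statement's English description precedes it below -/
import Mathlib

section
/- In the upper half-plane model of the hyperbolic plane, let r > 0, q = i·e^{−r}, and let C₁ be the geodesic given by the Euclidean circle x² + y² = R² and C₂ the geodesic given by (x−1)² + y² = 1 − R² for some 0 < R < 1, so that C₁ is orthogonal to the imaginary axis, C₂ is orthogonal to the line x = 1, and C₁ ⊥ C₂ automatically (since R² + (1−R²) = 1). If C₁ passes through q, then R = e^{−r}, and the hyperbolic distance from the intersection point s of C₁ and C₂ to the foot t of C₂ on the line x = 1 satisfies cosh(d(s,t)) = e^{r}. -/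
open Real UpperHalfPlane

/-- The quadrilateral computation of Lemma 2.1(a) in the upper half-plane.
If the geodesic semicircle `C₁ : x² + y² = R²` (orthogonal to the imaginary axis)
passes through `q = i·e^{-r}`, then `R = e^{-r}`; and if `s` is the intersection
point of `C₁` with the semicircle `C₂ : (x-1)² + y² = 1 - R²` (orthogonal to the
line `x = 1`), and `t = 1 + i·√(1-R²)` is the foot of `C₂` on the line `x = 1`,
then the hyperbolic distance satisfies `cosh (d(s,t)) = e^r`. -/
theorem quadrilateral_computation (r R : ℝ) (hr : 0 < r) (hR0 : 0 < R) (hR1 : R < 1)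
    (hq : (Complex.I * Real.exp (-r)).re ^ 2 + (Complex.I * Real.exp (-r)).im ^ 2 = R ^ 2) :
    R = Real.exp (-r) ∧
      ∀ s t : UpperHalfPlane,
        (s : ℂ).re ^ 2 + (s : ℂ).im ^ 2 = R ^ 2 →
        ((s : ℂ).re - 1) ^ 2 + (s : ℂ).im ^ 2 = 1 - R ^ 2 →
        (t : ℂ) = 1 + Complex.I * Real.sqrt (1 - R ^ 2) →
        Real.cosh (dist s t) = Real.exp r := by
  have hRe : R = Real.exp (-r) := by
    simp only [Complex.mul_re, Complex.mul_im, Complex.I_re, Complex.I_im,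
      Complex.ofReal_re, Complex.ofReal_im] at hq
    nlinarith [Real.exp_pos (-r), sq_nonneg (R - Real.exp (-r))]
  refine ⟨hRe, fun s t h1 h2 ht => ?_⟩
  have hR2 : 0 < 1 - R ^ 2 := by nlinarith
  -- coordinates of s
  have hx : (s : ℂ).re = R ^ 2 := by nlinarith
  have hy2 : (s : ℂ).im ^ 2 = R ^ 2 * (1 - R ^ 2) := by nlinarith
  have hsim : 0 < (s : ℂ).im := s.2
  have hy : (s : ℂ).im = R * Real.sqrt (1 - R ^ 2) := by
    have h : (R * Real.sqrt (1 - R ^ 2)) ^ 2 = R ^ 2 * (1 - R ^ 2) := by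
      rw [mul_pow, Real.sq_sqrt hR2.le]
    nlinarith [Real.sqrt_nonneg (1 - R ^ 2), mul_pos hR0 (Real.sqrt_pos.mpr hR2)]
  have hsq : 0 < Real.sqrt (1 - R ^ 2) := Real.sqrt_pos.mpr hR2
  have htre : (t : ℂ).re = 1 := by rw [ht]; simp
  have htim : (t : ℂ).im = Real.sqrt (1 - R ^ 2) := by rw [ht]; simp
  have hs2 : Real.sqrt (1 - R ^ 2) ^ 2 = 1 - R ^ 2 := Real.sq_sqrt hR2.le
  rw [UpperHalfPlane.cosh_dist, Complex.dist_eq, Complex.sq_norm, Complex.normSq_apply]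
  rw [← UpperHalfPlane.coe_im s, ← UpperHalfPlane.coe_im t, Complex.sub_re, Complex.sub_im,
    htre, htim, hx, hy]
  have hRinv : Real.exp r = 1 / R := by
    rw [hRe, one_div, ← Real.exp_neg, neg_neg]
  rw [hRinv]
  set u := Real.sqrt (1 - R ^ 2) with hu
  have key : (R ^ 2 - 1) * (R ^ 2 - 1) + (R * u - u) * (R * u - u)
      = 2 * (1 - R) * (1 - R ^ 2) := by linear_combination (R - 1) ^ 2 * hs2
  have keyD : 2 * (R * u) * u = 2 * R * (1 - R ^ 2) := by linear_combination 2 * R * hs2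
  rw [key, keyD]
  have h1R : (1 : ℝ) - R ^ 2 ≠ 0 := ne_of_gt hR2
  field_simp
  ring
end

section
/- For all ℓ > 2·arcsinh(1), one has sinh(ℓ/4)·arcsinh(sin θ_ℓ) ≥ 1/3, where sin θ_ℓ = 2/√5 if ℓ < 2·arccosh(3/2) and sin θ_ℓ = √(2cosh(ℓ/2)+1)/(cosh(ℓ/2)+1) otherwise. -/
open Real

/-- The inverse hyperbolic cosine. -/
noncomputable def arcosh (x : ℝ) : ℝ := Real.log (x + Real.sqrt (x ^ 2 - 1))

/-- The lower bound `sin θ_ℓ` on the sine of the intersection angle of two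
once-intersecting systoles of length `ℓ`. -/
noncomputable def sinTheta (ℓ : ℝ) : ℝ :=
  if ℓ < 2 * _root_.arcosh (3 / 2) then 2 / Real.sqrt 5
  else Real.sqrt (2 * Real.cosh (ℓ / 2) + 1) / (Real.cosh (ℓ / 2) + 1)

/-!
Write `s = sinh (ℓ / 4)`, so that `cosh (ℓ / 2) = 1 + 2 s²` and `sin θ_ℓ` is an explicit
function of `s`. Since `sinh` is convex on `[0, ∞)` and vanishes at `0`,
`arsinh x ≥ x · arsinh 1 ≥ 5x/6` for `x ∈ [0, 1]`, so it suffices to show `s · sin θ_ℓ ≥ 2/5`.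
In the first regime `s² ≥ (√2 - 1)/2 ≥ 1/5` because `ℓ/2 > arsinh 1`; in the second `s ≥ 1/2`,
and the inequality becomes `84 s⁴ + 43 s² - 16 ≥ 0`, with equality exactly at `s = 1/2`.
-/

namespace Real

theorem convexOn_sinh : ConvexOn ℝ (Set.Ici 0) sinh :=
  MonotoneOn.convexOn_of_deriv (convex_Ici 0) continuous_sinh.continuousOn
    differentiable_sinh.differentiableOn <| by
      rw [deriv_sinh, interior_Ici]
      exact cosh_strictMonoOn.monotoneOn.mono Set.Ioi_subset_Ici_self

theorem mul_arsinh_one_le_arsinh {x : ℝ} (hx₀ : 0 ≤ x) (hx₁ : x ≤ 1) :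
    x * arsinh 1 ≤ arsinh x := by
  have h := convexOn_sinh.2 (Set.mem_Ici.2 le_rfl)
    (Set.mem_Ici.2 (arsinh_nonneg_iff.2 zero_le_one)) (sub_nonneg.2 hx₁) hx₀ (sub_add_cancel 1 x)
  simp only [smul_eq_mul, mul_zero, zero_add, sinh_zero, sinh_arsinh, mul_one] at h
  rwa [← sinh_le_sinh, sinh_arsinh]

theorem seven_fifths_le_sqrt_two : (7 / 5 : ℝ) ≤ √2 :=
  (le_sqrt (by norm_num) (by norm_num)).2 (by norm_num)

theorem five_sixths_lt_arsinh_one : (5 / 6 : ℝ) < arsinh 1 := by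
  have h_log : log (12 / 5) ≤ arsinh 1 := by
    rw [arsinh, one_pow, one_add_one_eq_two]
    exact log_le_log (by norm_num) (by linarith [seven_fifths_le_sqrt_two])
  have h_split : log (12 / 5) = log 2 + log (6 / 5) := by
    rw [← log_mul two_ne_zero (by norm_num)]; norm_num
  have h_six_fifths : 1 - (6 / 5 : ℝ)⁻¹ ≤ log (6 / 5) := one_sub_inv_le_log_of_pos (by norm_num)
  linarith [log_two_gt_d9]

theorem cosh_two_mul_eq_one_add_two_mul_sinh_sq (x : ℝ) : cosh (2 * x) = 1 + 2 * sinh x ^ 2 := by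
  rw [cosh_two_mul, cosh_sq']; ring

theorem lt_two_mul_arcosh_iff {ℓ c : ℝ} (hℓ : 0 ≤ ℓ) (hc : 1 ≤ c) :
    ℓ < 2 * arcosh c ↔ cosh (ℓ / 2) < c := by
  conv_rhs => rw [← cosh_arcosh hc]
  rw [cosh_strictMonoOn.lt_iff_lt (Set.mem_Ici.2 (by positivity))
    (Set.mem_Ici.2 (arcosh_nonneg hc))]
  constructor <;> intro h <;> linarith

end Real

theorem one_third_le_mul_arsinh {s x : ℝ} (hs : 0 ≤ s) (hx₀ : 0 ≤ x) (hx₁ : x ≤ 1)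
    (h : 2 / 5 ≤ s * x) : 1 / 3 ≤ s * arsinh x :=
  calc 1 / 3 = 2 / 5 * (5 / 6) := by norm_num
    _ ≤ s * x * arsinh 1 := by gcongr; exact five_sixths_lt_arsinh_one.le
    _ = s * (x * arsinh 1) := mul_assoc _ _ _
    _ ≤ s * arsinh x := by gcongr; exact mul_arsinh_one_le_arsinh hx₀ hx₁

theorem one_third_le_mul_arsinh_two_div_sqrt_five {s : ℝ} (hs₀ : 0 ≤ s) (hs : 1 / 5 ≤ s ^ 2) :
    1 / 3 ≤ s * arsinh (2 / √5) := by
  have h5 : √5 ^ 2 = 5 := sq_sqrt (by norm_num)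
  have h5_pos : 0 < √5 := by positivity
  refine one_third_le_mul_arsinh hs₀ (by positivity) ?_ ?_
  · rw [div_le_one h5_pos]; nlinarith
  · rw [mul_div_assoc', le_div_iff₀ h5_pos]; nlinarith

theorem one_third_le_mul_arsinh_sqrt_div {s : ℝ} (hs : 1 / 2 ≤ s) :
    1 / 3 ≤ s * arsinh (√(4 * s ^ 2 + 3) / (2 * s ^ 2 + 2)) := by
  set r := √(4 * s ^ 2 + 3)
  have hr_sq : r ^ 2 = 4 * s ^ 2 + 3 := sq_sqrt (by positivity)
  have hr : 0 ≤ r := sqrt_nonneg _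
  have hden : 0 < 2 * s ^ 2 + 2 := by positivity
  refine one_third_le_mul_arsinh (by linarith) (by positivity) ?_ ?_
  · rw [div_le_one hden]; nlinarith
  · rw [mul_div_assoc', le_div_iff₀ hden]
    -- squaring reduces this to `84 s⁴ + 43 s² - 16 ≥ 0`
    nlinarith [mul_nonneg (mul_nonneg (by linarith : (0 : ℝ) ≤ s) hr) hr]

theorem sinh_mul_arsinh_ge (ℓ : ℝ) (hℓ : 2 * Real.arsinh 1 < ℓ) :
    1 / 3 ≤ Real.sinh (ℓ / 4) * Real.arsinh (sinTheta ℓ) := by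
  have ha : 0 < arsinh 1 := arsinh_pos_iff.2 one_pos
  have hℓ₀ : 0 ≤ ℓ := by linarith
  have hs₀ : 0 ≤ sinh (ℓ / 4) := sinh_nonneg_iff.2 (by linarith)
  have hc : cosh (ℓ / 2) = 1 + 2 * sinh (ℓ / 4) ^ 2 := by
    rw [← cosh_two_mul_eq_one_add_two_mul_sinh_sq]; ring_nf
  rw [sinTheta, show _root_.arcosh = Real.arcosh from rfl]
  split_ifs with h
  · have h_cosh : √2 < cosh (ℓ / 2) := by
      calc √2 = cosh (arsinh 1) := by rw [cosh_arsinh]; norm_num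
        _ < cosh (ℓ / 2) :=
          cosh_strictMonoOn (Set.mem_Ici.2 ha.le) (Set.mem_Ici.2 (by linarith)) (by linarith)
    exact one_third_le_mul_arsinh_two_div_sqrt_five hs₀ (by linarith [seven_fifths_le_sqrt_two])
  · have h_cosh : 3 / 2 ≤ cosh (ℓ / 2) :=
      not_lt.1 fun h' ↦ h ((lt_two_mul_arcosh_iff hℓ₀ (by norm_num)).2 h')
    have hs : 1 / 2 ≤ sinh (ℓ / 4) := by nlinarith
    have h_sin : √(2 * cosh (ℓ / 2) + 1) / (cosh (ℓ / 2) + 1)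
        = √(4 * sinh (ℓ / 4) ^ 2 + 3) / (2 * sinh (ℓ / 4) ^ 2 + 2) := by
      rw [hc]; ring_nf
    rw [h_sin]
    exact one_third_le_mul_arsinh_sqrt_div hs
end

section
/- For g ≥ 1 and n ≥ 0 real numbers, (2π(2g−2+n))/(2π(cosh(r/2)−1)) ≤ 8(2g−2+n)·e^{ℓ/2} whenever r = arcsinh(1/(2 sinh(ℓ/4))) and ℓ > 2 arcsinh(1); i.e., 1/(cosh(arcsinh(1/(2sinh(ℓ/4)))/2) − 1) ≤ 8·e^{ℓ/2} for all ℓ > 2·arcsinh(1). -/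
open Real

/-- For `0 ≤ v < 1`, `sinh v ≤ v / (1 - v^2)`. -/
lemma sinh_le_div_one_sub_sq {v : ℝ} (h0 : 0 ≤ v) (h1 : v < 1) :
    Real.sinh v ≤ v / (1 - v ^ 2) := by
  have hb1 : |Real.exp v - ∑ i ∈ Finset.range 3, v ^ i / i.factorial|
      ≤ |v| ^ 3 * ((3 : ℕ).succ / ((3 : ℕ).factorial * 3)) :=
    Real.exp_bound (by rw [abs_of_nonneg h0]; linarith) (by norm_num)
  have hb2 : |Real.exp (-v) - ∑ i ∈ Finset.range 3, (-v) ^ i / i.factorial|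
      ≤ |(-v)| ^ 3 * ((3 : ℕ).succ / ((3 : ℕ).factorial * 3)) :=
    Real.exp_bound (by rw [abs_neg, abs_of_nonneg h0]; linarith) (by norm_num)
  simp only [Finset.sum_range_succ, Finset.sum_range_zero, Nat.factorial] at hb1 hb2
  rw [abs_of_nonneg h0] at hb1
  rw [abs_neg, abs_of_nonneg h0] at hb2
  rw [abs_le] at hb1 hb2
  have hden : 0 < 1 - v ^ 2 := by nlinarith
  rw [Real.sinh_eq, div_le_div_iff₀ (by norm_num) hden]
  push_cast at hb1 hb2
  nlinarith [hb1.1, hb1.2, hb2.1, hb2.2, sq_nonneg v, pow_nonneg h0 3,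
    pow_nonneg h0 4, mul_nonneg (pow_nonneg h0 3) (sq_nonneg v)]

theorem disk_covering_bound (ℓ : ℝ) (hℓ : 2 * Real.arsinh 1 < ℓ) :
    1 / (Real.cosh (Real.arsinh (1 / (2 * Real.sinh (ℓ / 4))) / 2) - 1)
      ≤ 8 * Real.exp (ℓ / 2) := by
  have hℓ0 : 0 < ℓ := lt_trans (mul_pos two_pos (Real.arsinh_pos_iff.2 one_pos)) hℓ
  set v : ℝ := Real.exp (-(ℓ / 4)) with hv
  have hv0 : 0 < v := Real.exp_pos _
  have hv1 : v < 1 := Real.exp_lt_one_iff.2 (by linarith)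
  have hvsq : v ^ 2 = Real.exp (-(ℓ / 2)) := by
    rw [hv, ← Real.exp_nat_mul]; ring_nf
  have hden : 0 < 1 - v ^ 2 := by nlinarith
  -- express x
  have hsinh : 2 * Real.sinh (ℓ / 4) = (1 - v ^ 2) / v := by
    have he : Real.exp (-(ℓ/4)) = (Real.exp (ℓ/4))⁻¹ := Real.exp_neg _
    have hne : Real.exp (ℓ/4) ≠ 0 := (Real.exp_pos _).ne'
    rw [Real.sinh_eq, hv, he]
    field_simp
  have hx : 1 / (2 * Real.sinh (ℓ / 4)) = v / (1 - v ^ 2) := by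
    rw [hsinh, one_div_div]
  rw [hx]
  set x : ℝ := v / (1 - v ^ 2) with hxdef
  have hx0 : 0 < x := div_pos hv0 hden
  -- arsinh x ≥ v
  have h2 : Real.sinh v ≤ x := sinh_le_div_one_sub_sq hv0.le hv1
  have h3 : v ≤ Real.arsinh x := by
    have := Real.arsinh_le_arsinh.2 h2
    rwa [Real.arsinh_sinh] at this
  have harsinh_nonneg : 0 ≤ Real.arsinh x := le_trans hv0.le h3
  -- cosh comparison
  have h4 : Real.cosh (v / 2) ≤ Real.cosh (Real.arsinh x / 2) := by
    rw [Real.cosh_le_cosh, abs_of_nonneg (by linarith), abs_of_nonneg (by linarith)]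
    linarith
  have h5 : Real.cosh (v / 2) = 1 + 2 * Real.sinh (v / 4) ^ 2 := by
    have : v / 2 = 2 * (v / 4) := by ring
    rw [this, Real.cosh_two_mul, Real.cosh_sq']
    ring
  have h6 : v / 4 ≤ Real.sinh (v / 4) := Real.self_le_sinh_iff.2 (by linarith)
  have h7 : 1 + v ^ 2 / 8 ≤ Real.cosh (Real.arsinh x / 2) := by
    refine le_trans ?_ h4
    rw [h5]
    nlinarith
  have h8 : (0 : ℝ) < v ^ 2 / 8 := by positivity
  have h9 : 1 / (Real.cosh (Real.arsinh x / 2) - 1) ≤ 1 / (v ^ 2 / 8) :=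
    one_div_le_one_div_of_le h8 (by linarith)
  refine h9.trans (le_of_eq ?_)
  rw [hvsq, Real.exp_neg]
  field_simp
end

section
/- On a one-holed hyperbolic torus with geodesic boundary δ, the two systoles bound of the form cosh(sys/2) ≤ cosh(ℓ(δ)/6) + 1/2 together with ℓ(δ) ≥ sys and sys ≥ 4·arcsinh(1) yield a contradiction: there is no real x ≥ 4·arcsinh(1) with cosh(x/2) ≤ cosh(x/6) + 1/2. -/
open Real

theorem cosh_half_gt_cosh_sixth_add_half (x : ℝ) (hx : 4 * Real.arsinh 1 ≤ x) :
    Real.cosh (x / 2) > Real.cosh (x / 6) + 1 / 2 := by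
  set s := Real.arsinh 1 with hsdef
  have hs1 : Real.sinh s = 1 := Real.sinh_arsinh 1
  -- s > 3/8
  have hexp : Real.exp (-(3/8) : ℝ) > 5/8 := by
    have := Real.add_one_lt_exp (by norm_num : (-(3/8) : ℝ) ≠ 0)
    linarith
  have hsinh38 : Real.sinh (3/8 : ℝ) < 1 := by
    rw [Real.sinh_eq]
    have h1 : Real.exp (3/8 : ℝ) < 8/5 := by
      have h2 : Real.exp (3/8 : ℝ) = 1 / Real.exp (-(3/8) : ℝ) := by
        rw [Real.exp_neg]; field_simp
      rw [h2]
      rw [div_lt_iff₀ (by positivity)]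
      linarith
    have h3 : (0:ℝ) < Real.exp (-(3/8) : ℝ) := Real.exp_pos _
    have h4 : Real.exp (-(3/8) : ℝ) = Real.exp (-(3/8 : ℝ)) := by norm_num
    nlinarith [Real.exp_pos (-(3/8 : ℝ)), h4 ▸ hexp]
  have hs38 : (3/8 : ℝ) < s := by
    rw [← Real.sinh_lt_sinh, hs1]; exact hsinh38
  have hspos : (0:ℝ) < s := by linarith
  -- key identity
  have hid : Real.cosh (x/2) - Real.cosh (x/6) = 2 * Real.sinh (x/3) * Real.sinh (x/6) := by
    have h1 := Real.cosh_add (x/3) (x/6)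
    have h2 := Real.cosh_sub (x/3) (x/6)
    have e1 : x/3 + x/6 = x/2 := by ring
    have e2 : x/3 - x/6 = x/6 := by ring
    rw [e1] at h1; rw [e2] at h2
    linarith
  have h13 : Real.sinh (x/3) > 1 := by
    rw [← hs1]
    exact Real.sinh_lt_sinh.mpr (by linarith)
  have h16 : Real.sinh (x/6) > 1/4 := by
    have hx6 : (1/4 : ℝ) < x/6 := by linarith
    have := Real.self_lt_sinh_iff.mpr (by linarith : (0:ℝ) < x/6)
    linarith
  nlinarith [hid, h13, h16]
end
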